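/- arXiv:2107.12644 — 8 statements merged into one kernel-verified Lean document; each statement's English description precedes it below -/
import Mathlib

section
/- Let D be an integral domain and S a torsion-free cancellative commutative monoid. Then the conductor of the monoid algebra D[S] into its complete integral closure equals the set of all elements of D[S] whose coefficients lie in the conductor f_D = (D : D̂) and whose exponents lie in the conductor f_S = (S : Ŝ); that is, f_{D[S]} = f_D[f_S]. -/
open scoped AddMonoidAlgebra

/-- The subset `P[H]` of the monoid algebra `F[G]`: elements all of whose (nonzero)
coefficients lie in `P ⊆ F` and all of whose exponents lie in `H ⊆ G`. -/
def withCoeffsAndExps (F G : Type*) [Field F] [AddCommGroup G] (P : Set F) (H : Set G) :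
    Set (AddMonoidAlgebra F G) :=
  {f | ∀ g : G, f.coeff g ≠ 0 → f.coeff g ∈ P ∧ g ∈ H}

/-!
The inclusion `f_D[f_S] ⊆ f_{D[S]}` comes from `\widehat{D[S]} ⊆ D̂[Ŝ]`. To prove the latter,
order the torsion-free group `G` (lexicographically, through a `ℚ`-basis of its divisible hull).
If `c * y ^ n ∈ D[S]` for all `n`, and `c_a X^a`, `y_b X^b` are the top terms of `c` and `y`,
then the top term of `c * y ^ n` is `c_a y_b ^ n X^(a + n b)`, so `y_b ∈ D̂` and `b ∈ Ŝ`. Hence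
`y_b X^b`, and with it `y - y_b X^b`, lies in `\widehat{D[S]}`, and one inducts on the support.
Conversely, `e X^0` for `e ∈ D̂` and `X^s` for `s ∈ Ŝ` lie in `\widehat{D[S]}`; multiplying an
element of the conductor by them exhibits its coefficients in `f_D` and its exponents in `f_S`.
-/

open scoped nonZeroDivisors

open AddMonoidAlgebra

theorem IsAddTorsionFree.exists_linearOrder_isOrderedAddMonoid (G : Type*) [AddCommGroup G]
    [IsAddTorsionFree G] : ∃ _ : LinearOrder G, IsOrderedAddMonoid G := by
  classical
  let ι := Module.Basis.ofVectorSpaceIndex ℚ (DivisibleHull G)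
  let b : Module.Basis ι ℚ (DivisibleHull G) := Module.Basis.ofVectorSpace ℚ _
  let _ : LinearOrder ι := linearOrderOfSTO WellOrderingRel
  let f : G →+ Lex (ι →₀ ℚ) := (toLexAddEquiv (ι →₀ ℚ)).toAddMonoidHom.comp
      (b.repr.toAddMonoidHom.comp (DivisibleHull.coeAddMonoidHom G))
  have hf : Function.Injective f :=
    (toLexAddEquiv _).injective.comp (b.repr.injective.comp DivisibleHull.coe_injective)
  let _ := LinearOrder.lift' f hf
  exact ⟨_, Function.Injective.isOrderedAddMonoid f (map_add f) Iff.rfl⟩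

section WithCoeffsAndExps

variable {F G : Type*} [Field F] [AddCommGroup G] {P : Set F} {H : Set G}

theorem single_mem_withCoeffsAndExps {g : G} {e : F} (he : e ∈ P) (hg : g ∈ H) :
    single g e ∈ withCoeffsAndExps F G P H := by
  classical
  intro g' hg'
  rw [coeff_single, Finsupp.single_apply] at hg' ⊢
  split_ifs at hg' ⊢ with h
  · exact ⟨he, h ▸ hg⟩
  · exact absurd rfl hg'

theorem coeff_mem_of_mem_withCoeffsAndExps (hP : (0 : F) ∈ P) {f : F[G]}
    (hf : f ∈ withCoeffsAndExps F G P H) (g : G) : f.coeff g ∈ P := by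
  by_cases h : f.coeff g = 0
  · exact h ▸ hP
  · exact (hf g h).1

theorem mul_mem_withCoeffsAndExps {P₁ P₂ : Set F} {P : AddSubmonoid F} {H₁ H₂ : Set G}
    (hP : ∀ a ∈ P₁, ∀ b ∈ P₂, a * b ∈ P) (hH : ∀ a ∈ H₁, ∀ b ∈ H₂, a + b ∈ H) {x y : F[G]}
    (hx : x ∈ withCoeffsAndExps F G P₁ H₁) (hy : y ∈ withCoeffsAndExps F G P₂ H₂) :
    x * y ∈ withCoeffsAndExps F G P H := by
  classical
  intro g hg
  constructor
  · rw [coeff_mul]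
    refine sum_mem fun a ha => sum_mem fun b hb => ?_
    dsimp only
    split_ifs
    · exact hP _ (hx a (Finsupp.mem_support_iff.mp ha)).1 _
        (hy b (Finsupp.mem_support_iff.mp hb)).1
    · exact P.zero_mem
  · obtain ⟨a, ha, b, hb, rfl⟩ :=
      Finset.mem_add.mp (support_coeff_mul_subset x y (Finsupp.mem_support_iff.mpr hg))
    exact hH a (hx a (Finsupp.mem_support_iff.mp ha)).2 b (hy b (Finsupp.mem_support_iff.mp hb)).2

def withCoeffsAndExpsSubring (A : Subring F) (S : AddSubmonoid G) : Subring F[G] where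
  carrier := withCoeffsAndExps F G A S
  zero_mem' _ hg := absurd rfl hg
  one_mem' := single_mem_withCoeffsAndExps A.one_mem S.zero_mem
  add_mem' {x y} hx hy g hg := by
    refine ⟨A.add_mem (coeff_mem_of_mem_withCoeffsAndExps A.zero_mem hx g)
      (coeff_mem_of_mem_withCoeffsAndExps A.zero_mem hy g), ?_⟩
    by_cases h : x.coeff g = 0
    · exact (hy g (by simpa [h] using hg)).2
    · exact (hx g h).2
  neg_mem' {x} hx g hg := by
    simpa using hx g (by simpa using hg)
  mul_mem' := mul_mem_withCoeffsAndExps (P := A.toAddSubmonoid)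
    (fun _ ha _ hb => A.mul_mem ha hb) (fun _ ha _ hb => S.add_mem ha hb)

end WithCoeffsAndExps

section LinearOrder

variable {R G : Type*} [Semiring R] [AddCommMonoid G] [LinearOrder G]
  [IsOrderedCancelAddMonoid G] {p q : R[G]} {a b : G}

theorem AddMonoidAlgebra.le_add_of_mem_support_mul (hp : ∀ ⦃x⦄, x ∈ p.coeff.support → x ≤ a)
    (hq : ∀ ⦃x⦄, x ∈ q.coeff.support → x ≤ b) ⦃x : G⦄ (hx : x ∈ (p * q).coeff.support) :
    x ≤ a + b := by
  obtain ⟨u, hu, v, hv, rfl⟩ := Finset.mem_add.mp (support_coeff_mul_subset p q hx)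
  exact add_le_add (hp hu) (hq hv)

theorem AddMonoidAlgebra.coeff_mul_add_of_forall_le (hp : ∀ ⦃x⦄, x ∈ p.coeff.support → x ≤ a)
    (hq : ∀ ⦃x⦄, x ∈ q.coeff.support → x ≤ b) : (p * q).coeff (a + b) = p.coeff a * q.coeff b :=
  coeff_mul_add_of_uniqueAdd fun _ _ hx hy h => (add_eq_add_iff_eq_and_eq (hp hx) (hq hy)).mp h

theorem AddMonoidAlgebra.le_nsmul_of_mem_support_pow (hq : ∀ ⦃x⦄, x ∈ q.coeff.support → x ≤ b)
    (n : ℕ) ⦃x : G⦄ (hx : x ∈ (q ^ n).coeff.support) : x ≤ n • b := by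
  induction n generalizing x with
  | zero =>
    rw [pow_zero, one_def] at hx
    simp [Finset.mem_singleton.mp (Finsupp.support_single_subset hx)]
  | succ n ih =>
    rw [pow_succ] at hx
    exact succ_nsmul b n ▸ le_add_of_mem_support_mul ih hq hx

theorem AddMonoidAlgebra.coeff_pow_nsmul_of_forall_le (hq : ∀ ⦃x⦄, x ∈ q.coeff.support → x ≤ b)
    (n : ℕ) : (q ^ n).coeff (n • b) = q.coeff b ^ n := by
  induction n with
  | zero => simp [one_def]
  | succ n ih =>
    rw [pow_succ, succ_nsmul, coeff_mul_add_of_forall_le (le_nsmul_of_mem_support_pow hq n) hq,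
      ih, pow_succ]

end LinearOrder

theorem Subring.isAlmostIntegral_iff {K : Type*} [CommRing K] [IsDomain K] {R : Subring K}
    {x : K} : IsAlmostIntegral R x ↔ ∃ c ∈ R, c ≠ 0 ∧ ∀ n : ℕ, c * x ^ n ∈ R := by
  constructor
  · rintro ⟨c, hc, h⟩
    refine ⟨c, c.2, by simpa using nonZeroDivisors.ne_zero hc, fun n => ?_⟩
    obtain ⟨r, hr⟩ := h n
    exact (hr ▸ r.2 : c • x ^ n ∈ R)
  · rintro ⟨c, hcR, hc, h⟩
    exact ⟨⟨c, hcR⟩, mem_nonZeroDivisors_of_ne_zero (by simpa using hc),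
      fun n => ⟨⟨_, h n⟩, rfl⟩⟩

theorem RingHom.isAlmostIntegral_range_iff {D K : Type*} [CommRing D] [CommRing K] [IsDomain K]
    (f : D →+* K) (hf : Function.Injective f) {x : K} :
    IsAlmostIntegral f.range x ↔ ∃ c : D, c ≠ 0 ∧ ∀ n : ℕ, f c * x ^ n ∈ f.range := by
  rw [Subring.isAlmostIntegral_iff]
  constructor
  · rintro ⟨_, ⟨c, rfl⟩, hc, h⟩
    exact ⟨c, fun h0 => hc (h0 ▸ map_zero f), h⟩
  · rintro ⟨c, hc, h⟩
    exact ⟨f c, ⟨c, rfl⟩, (map_ne_zero_iff f hf).mpr hc, h⟩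

def AddSubmonoid.completeIntegralClosure {G : Type*} [AddMonoid G] (S : AddSubmonoid G) :
    Set G :=
  {x | ∃ c ∈ S, ∀ n : ℕ, c + n • x ∈ S}

section CompleteIntegralClosure

variable {F G : Type*} [Field F] [AddCommGroup G] (A : Subring F) (S : AddSubmonoid G)

theorem isAlmostIntegral_single [IsDomain F[G]] {e : F} {s : G} (he : IsAlmostIntegral A e)
    (hs : s ∈ S.completeIntegralClosure) :
    IsAlmostIntegral (withCoeffsAndExpsSubring A S) (single s e) := by
  rw [Subring.isAlmostIntegral_iff] at he ⊢
  obtain ⟨c, hcA, hc0, hc⟩ := he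
  obtain ⟨t, htS, ht⟩ := hs
  refine ⟨single t c, single_mem_withCoeffsAndExps hcA htS, by simpa using hc0, fun n => ?_⟩
  rw [single_pow, single_mul_single]
  exact single_mem_withCoeffsAndExps (hc n) (ht n)

theorem mem_withCoeffsAndExps_of_forall_mul_mem [IsDomain F[G]] {x : F[G]}
    (hx : ∀ y, IsAlmostIntegral (withCoeffsAndExpsSubring A S) y →
      x * y ∈ withCoeffsAndExpsSubring A S) :
    x ∈ withCoeffsAndExps F G {d | ∀ e, IsAlmostIntegral A e → d * e ∈ A}
      {g | ∀ s ∈ S.completeIntegralClosure, g + s ∈ S} := by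
  have h0 : (0 : G) ∈ S.completeIntegralClosure := ⟨0, S.zero_mem, by simp⟩
  intro g hg
  constructor
  · intro e he
    have := coeff_mem_of_mem_withCoeffsAndExps A.zero_mem
      (hx _ (isAlmostIntegral_single A S he h0)) g
    rwa [coeff_mul_single_apply, neg_zero, add_zero] at this
  · intro s hs
    have := hx _ (isAlmostIntegral_single A S (completeIntegralClosure A F).one_mem hs) (g + s)
    rw [coeff_mul_single_apply, add_neg_cancel_right, mul_one] at this
    exact (this hg).2

variable [LinearOrder G] [IsOrderedAddMonoid G]

theorem isAlmostIntegral_coeff_and_mem_of_forall_le {y : F[G]}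
    (hy : IsAlmostIntegral (withCoeffsAndExpsSubring A S) y) {b : G}
    (hb : b ∈ y.coeff.support) (hmax : ∀ ⦃x⦄, x ∈ y.coeff.support → x ≤ b) :
    IsAlmostIntegral A (y.coeff b) ∧ b ∈ S.completeIntegralClosure := by
  obtain ⟨c, hcR, hc0, hc⟩ := Subring.isAlmostIntegral_iff.mp hy
  have hc_supp : c.coeff.support.Nonempty := by simpa using hc0
  set a := c.coeff.support.max' hc_supp
  have ha : c.coeff a ≠ 0 := Finsupp.mem_support_iff.mp (c.coeff.support.max'_mem hc_supp)
  have hlead (n : ℕ) : (c * y ^ n).coeff (a + n • b) = c.coeff a * y.coeff b ^ n := by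
    rw [coeff_mul_add_of_forall_le (fun x hx => c.coeff.support.le_max' x hx)
      (le_nsmul_of_mem_support_pow hmax n), coeff_pow_nsmul_of_forall_le hmax]
  have hmem (n : ℕ) : c.coeff a * y.coeff b ^ n ∈ A ∧ a + n • b ∈ S := by
    rw [← hlead]
    refine hc n _ ?_
    rw [hlead]
    exact mul_ne_zero ha (pow_ne_zero _ (Finsupp.mem_support_iff.mp hb))
  exact ⟨Subring.isAlmostIntegral_iff.mpr ⟨_, (hcR a ha).1, ha, fun n => (hmem n).1⟩,
    ⟨a, (hcR a ha).2, fun n => (hmem n).2⟩⟩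

theorem mem_withCoeffsAndExps_of_isAlmostIntegral {y : F[G]}
    (hy : IsAlmostIntegral (withCoeffsAndExpsSubring A S) y) :
    y ∈ withCoeffsAndExps F G {e | IsAlmostIntegral A e} S.completeIntegralClosure := by
  induction hN : y.coeff.support.card generalizing y with
  | zero =>
    rw [Finset.card_eq_zero, Finsupp.support_eq_empty, coeff_eq_zero] at hN
    subst hN
    exact fun g hg => absurd rfl hg
  | succ N ih =>
    have hy_supp : y.coeff.support.Nonempty := Finset.card_pos.mp (by omega)
    set b := y.coeff.support.max' hy_supp
    have hb : b ∈ y.coeff.support := y.coeff.support.max'_mem hy_supp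
    have hlead := isAlmostIntegral_coeff_and_mem_of_forall_le A S hy hb
      (fun x hx => y.coeff.support.le_max' x hx)
    have hrest : IsAlmostIntegral (withCoeffsAndExpsSubring A S) (y.erase b) := by
      rw [← add_sub_cancel_left (single b (y.coeff b)) (y.erase b), single_add_erase]
      exact (completeIntegralClosure _ _).sub_mem hy (isAlmostIntegral_single A S hlead.1 hlead.2)
    have hrest_mem := ih hrest (by simp [Finsupp.support_erase, Finset.card_erase_of_mem hb, hN])
    intro g hg
    by_cases hgb : g = b
    · exact hgb ▸ hlead
    · have hcoeff : (y.erase b).coeff g = y.coeff g := Finsupp.erase_ne hgb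
      exact hcoeff ▸ hrest_mem g (hcoeff ▸ hg)

theorem conductor_withCoeffsAndExpsSubring :
    {x : F[G] | ∀ y, IsAlmostIntegral (withCoeffsAndExpsSubring A S) y →
      x * y ∈ withCoeffsAndExpsSubring A S} =
    withCoeffsAndExps F G {d | ∀ e, IsAlmostIntegral A e → d * e ∈ A}
      {g | ∀ s ∈ S.completeIntegralClosure, g + s ∈ S} := by
  ext x
  refine ⟨mem_withCoeffsAndExps_of_forall_mul_mem A S, fun hx y hy => ?_⟩
  refine mul_mem_withCoeffsAndExps (P := A.toAddSubmonoid) ?_ ?_ hx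
    (mem_withCoeffsAndExps_of_isAlmostIntegral A S hy)
  · exact fun _ hd e he => hd e he
  · exact fun _ hg s hs => hg s hs

end CompleteIntegralClosure

theorem stmt0_general {D F G : Type*} [CommRing D] [Field F] [Algebra D F]
    [IsFractionRing D F] [AddCommGroup G] (hG : ∀ g : G, g ≠ 0 → ¬IsOfFinAddOrder g)
    (S : AddSubmonoid G)
    -- the image of `D` in its quotient field
    (D' : Set F) (hD' : D' = Set.range (algebraMap D F))
    -- the complete integral closure of `D` (inside `F`)
    (hatD : Set F) (hhatD : hatD = {x : F | ∃ c : D, c ≠ 0 ∧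
      ∀ n : ℕ, algebraMap D F c * x ^ n ∈ D'})
    -- the conductor of `D`
    (fD : Set F) (hfD : fD = {d : F | ∀ e ∈ hatD, d * e ∈ D'})
    -- the complete integral closure of `S` (inside its quotient group `G`)
    (hatS : Set G) (hhatS : hatS = {x : G | ∃ c ∈ S, ∀ n : ℕ, c + n • x ∈ S})
    -- the conductor of `S`
    (fS : Set G) (hfS : fS = {g : G | ∀ s ∈ hatS, g + s ∈ S})
    -- the monoid algebra `D[S]` inside `F[G]`
    (DS : Set (AddMonoidAlgebra F G)) (hDS : DS = withCoeffsAndExps F G D' S)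
    -- the complete integral closure of `D[S]`
    (hatDS : Set (AddMonoidAlgebra F G)) (hhatDS : hatDS = {x : AddMonoidAlgebra F G |
      ∃ c ∈ DS, c ≠ 0 ∧ ∀ n : ℕ, c * x ^ n ∈ DS}) :
    {x : AddMonoidAlgebra F G | ∀ y ∈ hatDS, x * y ∈ DS} = withCoeffsAndExps F G fD fS := by
  have := IsAddTorsionFree.of_not_isOfFinAddOrder hG
  obtain ⟨_, _⟩ := IsAddTorsionFree.exists_linearOrder_isOrderedAddMonoid G
  set A := (algebraMap D F).range
  obtain rfl : D' = A := hD'.trans (RingHom.coe_range _).symm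
  obtain rfl : hatD = {e | IsAlmostIntegral A e} := hhatD.trans <| Set.ext fun _ =>
    ((algebraMap D F).isAlmostIntegral_range_iff (IsFractionRing.injective D F)).symm
  obtain rfl : DS = withCoeffsAndExpsSubring A S := hDS
  obtain rfl : hatDS = {y | IsAlmostIntegral (withCoeffsAndExpsSubring A S) y} :=
    hhatDS.trans <| Set.ext fun _ => Subring.isAlmostIntegral_iff.symm
  subst hfD hhatS hfS
  exact conductor_withCoeffsAndExpsSubring A S

/-- Let `D` be an integral domain with quotient field `F`, and `S` a torsion-free
cancellative commutative monoid with quotient group `G` (realized as a submonoid of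
the abelian group `G`).  Inside the monoid algebra `F[G]`, the conductor
`f_{D[S]} = (D[S] : \widehat{D[S]})` of the monoid algebra `D[S]` equals
`f_D[f_S]`, the set of elements with coefficients in the conductor
`f_D = (D : D̂)` and exponents in the conductor `f_S = (S : Ŝ)`. -/
theorem stmt0 {D F G : Type*} [CommRing D] [IsDomain D] [Field F] [Algebra D F]
    [IsFractionRing D F] [AddCommGroup G] (hG : ∀ g : G, g ≠ 0 → ¬IsOfFinAddOrder g)
    (S : AddSubmonoid G)
    -- the image of `D` in its quotient field
    (D' : Set F) (hD' : D' = Set.range (algebraMap D F))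
    -- the complete integral closure of `D` (inside `F`)
    (hatD : Set F) (hhatD : hatD = {x : F | ∃ c : D, c ≠ 0 ∧
      ∀ n : ℕ, algebraMap D F c * x ^ n ∈ D'})
    -- the conductor of `D`
    (fD : Set F) (hfD : fD = {d : F | ∀ e ∈ hatD, d * e ∈ D'})
    -- the complete integral closure of `S` (inside its quotient group `G`)
    (hatS : Set G) (hhatS : hatS = {x : G | ∃ c ∈ S, ∀ n : ℕ, c + n • x ∈ S})
    -- the conductor of `S`
    (fS : Set G) (hfS : fS = {g : G | ∀ s ∈ hatS, g + s ∈ S})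
    -- the monoid algebra `D[S]` inside `F[G]`
    (DS : Set (AddMonoidAlgebra F G)) (hDS : DS = withCoeffsAndExps F G D' S)
    -- the complete integral closure of `D[S]`
    (hatDS : Set (AddMonoidAlgebra F G)) (hhatDS : hatDS = {x : AddMonoidAlgebra F G |
      ∃ c ∈ DS, c ≠ 0 ∧ ∀ n : ℕ, c * x ^ n ∈ DS}) :
    {x : AddMonoidAlgebra F G | ∀ y ∈ hatDS, x * y ∈ DS} = withCoeffsAndExps F G fD fS :=
  stmt0_general hG S D' hD' hatD hhatD fD hfD hatS hhatS fS hfS DS hDS hatDS hhatDS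
end

section
/- Let K be a field and S a numerical monoid. Then the complete integral closure of the monoid algebra K[S] is the polynomial ring K[X] (i.e., K[ℕ₀]). -/
/-!
If `c · xⁿ` is a polynomial for every `n`, then writing `x = p / q` in lowest terms gives
`qⁿ ∣ c` for every `n`, which bounds `n · deg q` by `deg c`; hence `q = 1`. So `K[X]` is completely
integrally closed, and the complete integral closure of `K[S]` is at most `K[X]`. Conversely,
if every `k ≥ N` lies in `S`, then `X ^ N · K[X] ⊆ K[S]`, so `c = X ^ N` witnesses that every
polynomial is almost integral over `K[S]`.
-/

open Polynomial Filter

open scoped nonZeroDivisors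

namespace RatFunc

variable {K : Type*} [Field K]

theorem denom_pow_dvd_of_mul_pow_eq {x : RatFunc K} {c d : K[X]} {n : ℕ}
    (h : algebraMap K[X] (RatFunc K) c * x ^ n = algebraMap K[X] (RatFunc K) d) :
    x.denom ^ n ∣ c := by
  have hnum : algebraMap K[X] (RatFunc K) x.num = x * algebraMap K[X] (RatFunc K) x.denom :=
    (div_eq_iff (algebraMap_ne_zero (denom_ne_zero x))).mp (num_div_denom x)
  have key : c * x.num ^ n = d * x.denom ^ n := by
    apply algebraMap_injective K
    simp only [map_mul, map_pow, hnum, ← h]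
    ring
  exact (isCoprime_num_denom x).symm.pow.dvd_of_dvd_mul_right ⟨d, by linear_combination key⟩

theorem mem_range_algebraMap_of_isAlmostIntegral {x : RatFunc K}
    (hx : IsAlmostIntegral K[X] x) : x ∈ Set.range (algebraMap K[X] (RatFunc K)) := by
  obtain ⟨c, hc, h⟩ := hx
  obtain ⟨d, hd⟩ := h (c.natDegree + 1)
  rw [Algebra.smul_def, eq_comm] at hd
  have hdeg := natDegree_le_of_dvd (denom_pow_dvd_of_mul_pow_eq hd) (nonZeroDivisors.ne_zero hc)
  rw [natDegree_pow] at hdeg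
  have hdenom : x.denom = 1 := (monic_denom x).natDegree_eq_zero.mp (by nlinarith)
  exact ⟨x.num, by simpa [hdenom] using num_div_denom x⟩

end RatFunc

theorem Polynomial.coeff_X_pow_mul_of_lt {R : Type*} [Semiring R] (p : R[X]) {N k : ℕ}
    (hk : k < N) : (X ^ N * p).coeff k = 0 := by
  simp [coeff_X_pow_mul', not_le.mpr hk]

/-- Let `K` be a field and `S` a numerical monoid (a submonoid of `ℕ₀` with finite
complement). Then the complete integral closure of the monoid algebra `K[S]`
(computed inside the quotient field `K(X)`) is the polynomial ring `K[X]`. -/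
theorem stmt1 (K : Type*) [Field K] (S : AddSubmonoid ℕ) (hS : ((S : Set ℕ)ᶜ).Finite) :
    {x : RatFunc K | ∃ c : Polynomial K, c ≠ 0 ∧ (∀ n : ℕ, n ∉ S → c.coeff n = 0) ∧
        ∀ n : ℕ, ∃ d : Polynomial K, (∀ k : ℕ, k ∉ S → d.coeff k = 0) ∧
          algebraMap (Polynomial K) (RatFunc K) c * x ^ n =
            algebraMap (Polynomial K) (RatFunc K) d}
      = Set.range (algebraMap (Polynomial K) (RatFunc K)) := by
  ext x
  constructor
  · rintro ⟨c, hc, -, h⟩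
    refine RatFunc.mem_range_algebraMap_of_isAlmostIntegral
      ⟨c, mem_nonZeroDivisors_of_ne_zero hc, fun n => ?_⟩
    obtain ⟨d, -, hd⟩ := h n
    exact ⟨d, by rw [Algebra.smul_def, hd]⟩
  · rintro ⟨p, rfl⟩
    obtain ⟨N, hN⟩ := eventually_atTop.mp
      (Nat.cofinite_eq_atTop ▸ eventually_cofinite.mpr hS : ∀ᶠ k in atTop, k ∈ S)
    have hsupp (q : K[X]) (k : ℕ) (hk : k ∉ S) : (X ^ N * q).coeff k = 0 :=
      coeff_X_pow_mul_of_lt q (not_le.mp (mt (hN k) hk))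
    refine ⟨X ^ N, pow_ne_zero _ X_ne_zero, by simpa using hsupp 1, fun n => ?_⟩
    exact ⟨X ^ N * p ^ n, hsupp _, by simp⟩
end

section
/- Let K be a field and S a numerical monoid with Frobenius number f(S) = max(ℕ₀ \ S). Then the conductor (K[S] : K[X]) equals K[f_S], the K-span of the monomials X^n with n > f(S). -/
open Polynomial

/-!
Taking `p = 1` shows that an element of the conductor is a polynomial `q`; taking
`p = X ^ (F - n)` moves the coefficient of `X ^ n` to `X ^ F`, which must vanish since `F ∉ S`.
Conversely, `X ^ (F + 1) ∣ q` gives `X ^ (F + 1) ∣ q * p`, and every exponent above `F` lies in `S`.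
-/

theorem Polynomial.coeff_eq_zero_of_coeff_mul_X_pow_sub {R : Type*} [Semiring R] {q : R[X]}
    {F n : ℕ} (hn : n ≤ F) (h : (q * X ^ (F - n)).coeff F = 0) : q.coeff n = 0 := by
  obtain ⟨k, rfl⟩ := Nat.exists_eq_add_of_le hn
  rwa [Nat.add_sub_cancel_left, coeff_mul_X_pow] at h

theorem Polynomial.coeff_mul_eq_zero_of_forall_le {R : Type*} [Semiring R] {q : R[X]} {F : ℕ}
    (hq : ∀ m ≤ F, q.coeff m = 0) (p : R[X]) {n : ℕ} (hn : n ≤ F) : (q * p).coeff n = 0 := by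
  have hdvd : X ^ (F + 1) ∣ q * p :=
    (X_pow_dvd_iff.mpr fun m hm => hq m (Nat.lt_succ_iff.mp hm)).mul_right p
  exact X_pow_dvd_iff.mp hdvd n (Nat.lt_succ_of_le hn)

theorem stmt2_general (K : Type*) [Field K] (S : AddSubmonoid ℕ)
    (F : ℕ) (hF : F ∉ S) (hFmax : ∀ n : ℕ, F < n → n ∈ S) :
    {x : RatFunc K | ∀ p : Polynomial K, ∃ q : Polynomial K,
        (∀ n : ℕ, n ∉ S → q.coeff n = 0) ∧
          x * algebraMap (Polynomial K) (RatFunc K) p =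
            algebraMap (Polynomial K) (RatFunc K) q}
      = {x : RatFunc K | ∃ q : Polynomial K, (∀ n : ℕ, n ≤ F → q.coeff n = 0) ∧
          x = algebraMap (Polynomial K) (RatFunc K) q} := by
  ext x
  constructor
  · intro h
    obtain ⟨q, -, hx⟩ := h 1
    rw [map_one, mul_one] at hx
    refine ⟨q, fun n hn => ?_, hx⟩
    obtain ⟨r, hr, hxr⟩ := h (X ^ (F - n))
    rw [hx, ← map_mul, (RatFunc.algebraMap_injective K).eq_iff] at hxr
    exact coeff_eq_zero_of_coeff_mul_X_pow_sub hn (hxr ▸ hr F hF)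
  · rintro ⟨q, hq, rfl⟩ p
    refine ⟨q * p, fun n hn => coeff_mul_eq_zero_of_forall_le hq p ?_, (map_mul _ _ _).symm⟩
    exact not_lt.mp (mt (hFmax n) hn)

/-- Let `K` be a field and `S` a numerical monoid with Frobenius number
`F = max(ℕ₀ \ S)`. Then the conductor `(K[S] : K[X])`, computed inside the quotient
field `K(X)`, equals `K[f_S]`, the `K`-span of the monomials `X^n` with `n > F`. -/
theorem stmt2 (K : Type*) [Field K] (S : AddSubmonoid ℕ) (hS : ((S : Set ℕ)ᶜ).Finite)
    (F : ℕ) (hF : F ∉ S) (hFmax : ∀ n : ℕ, F < n → n ∈ S) :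
    {x : RatFunc K | ∀ p : Polynomial K, ∃ q : Polynomial K,
        (∀ n : ℕ, n ∉ S → q.coeff n = 0) ∧
          x * algebraMap (Polynomial K) (RatFunc K) p =
            algebraMap (Polynomial K) (RatFunc K) q}
      = {x : RatFunc K | ∃ q : Polynomial K, (∀ n : ℕ, n ≤ F → q.coeff n = 0) ∧
          x = algebraMap (Polynomial K) (RatFunc K) q} :=
  stmt2_general K S F hF hFmax
end

section
/- Let K be a Hilbertian field, a_0, …, a_n ∈ K with a_0 ≠ 0, and m > n an integer. Then there exists y ∈ K \ {0} such that the polynomial a_0 + a_1 X + ⋯ + a_n X^n + (1/y)·X^m is irreducible in K[X]. Consequently, there are infinitely many irreducible polynomials in K[X] with prescribed coefficients a_0, …, a_n in degrees 0 through n. -/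
open Polynomial

/-- A field `K` is Hilbertian: for every polynomial `f ∈ K[Y][X]` that is irreducible
over the rational function field `K(Y)` and every nonzero `g ∈ K[Y]`, there exists
`y ∈ K` with `g(y) ≠ 0` such that the specialization `f(y, X)` is irreducible in `K[X]`. -/
def IsHilbertianField (K : Type*) [Field K] : Prop :=
  ∀ f : Polynomial (Polynomial K),
    Irreducible (f.map (algebraMap (Polynomial K) (RatFunc K))) →
      ∀ g : Polynomial K, g ≠ 0 →
        ∃ y : K, g.eval y ≠ 0 ∧ Irreducible (f.map (Polynomial.evalRingHom y))

/-! In `K[X][X]` the inner variable plays the role of `Y`, so `C X * S.map C + X ^ m` is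
`Y·S(X) + X^m`. It is Eisenstein at the prime `Y` of `K[Y]` (the constant term `Y·S(0)` is not
divisible by `Y²` since `S(0) ≠ 0`), hence irreducible over `K(Y)` by Gauss's lemma. A Hilbertian
specialization `Y ↦ y` with `y ≠ 0` keeps `y·S + X^m` irreducible, and dividing by `y` gives
`S + y⁻¹·X^m`. Doing this for every `m > n` yields irreducible polynomials of unbounded degree
with the prescribed coefficients in degrees `0, …, n`. -/

section Eisenstein

variable {R : Type*} [CommRing R] [IsDomain R] {p : R} {A : R[X]} {m : ℕ}

theorem degree_C_mul_add_X_pow (hp : p ≠ 0) (hA : A.degree < m) :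
    (C p * A + X ^ m).degree = (m : WithBot ℕ) := by
  rw [add_comm, degree_add_eq_left_of_degree_lt] <;> rw [degree_X_pow]
  rwa [degree_C_mul hp]

theorem monic_C_mul_add_X_pow (hp : p ≠ 0) (hA : A.degree < m) : (C p * A + X ^ m).Monic :=
  add_comm (C p * A) _ ▸ monic_X_pow_add (by rwa [degree_C_mul hp])

theorem irreducible_C_mul_add_X_pow (hp : Prime p) (hA : A.degree < m)
    (h0 : ¬p ∣ A.coeff 0) : Irreducible (C p * A + X ^ m) := by
  have hdeg := degree_C_mul_add_X_pow hp.ne_zero hA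
  have hm : 0 < m := by
    have : A ≠ 0 := by rintro rfl; simp at h0
    exact_mod_cast (zero_le_degree_iff.mpr this).trans_lt hA
  have hcoeff : ∀ i < m, (C p * A + X ^ m).coeff i = p * A.coeff i := fun i hi => by
    simp [coeff_X_pow, hi.ne]
  have hmonic := monic_C_mul_add_X_pow hp.ne_zero hA
  refine irreducible_of_eisenstein_criterion
    ((Ideal.span_singleton_prime hp.ne_zero).mpr hp) ?_ (fun i hi => ?_) ?_ ?_ hmonic.isPrimitive
  · rw [hmonic.leadingCoeff, Ideal.mem_span_singleton]
    exact hp.not_dvd_one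
  · rw [hdeg, Nat.cast_lt] at hi
    rw [hcoeff i hi]
    exact Ideal.mul_mem_right _ _ (Ideal.mem_span_singleton_self p)
  · rw [hdeg]
    exact_mod_cast hm
  · rw [hcoeff 0 hm, Ideal.span_singleton_pow, Ideal.mem_span_singleton, pow_two]
    exact fun h => h0 ((mul_dvd_mul_iff_left hp.ne_zero).mp h)

end Eisenstein

theorem map_evalRingHom_C_X_mul_map_C_add_X_pow {R : Type*} [CommRing R] (S : R[X]) (y : R)
    (m : ℕ) :
    (C X * S.map C + X ^ m).map (evalRingHom y) = C y * S + X ^ m := by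
  have : (evalRingHom y).comp C = RingHom.id R := RingHom.ext fun _ => eval_C
  simp [Polynomial.map_map, this]

section Hilbertian

variable {K : Type*} [Field K]

theorem irreducible_map_ratFunc_C_X_mul_map_C_add_X_pow {S : K[X]} {m : ℕ} (hS : S.natDegree < m)
    (h0 : S.coeff 0 ≠ 0) :
    Irreducible ((C X * S.map C + X ^ m).map (algebraMap K[X] (RatFunc K))) := by
  have hSC : (S.map C).degree < m := by
    rw [degree_map]
    exact degree_le_natDegree.trans_lt (WithBot.coe_lt_coe.mpr hS)
  refine (monic_C_mul_add_X_pow X_ne_zero hSC).irreducible_iff_irreducible_map_fraction_map.mp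
    (irreducible_C_mul_add_X_pow prime_X hSC ?_)
  rwa [coeff_map, X_dvd_iff, coeff_C_zero]

theorem IsHilbertianField.exists_irreducible_add_C_inv_mul_X_pow
    (hK : IsHilbertianField K) {S : K[X]} {m : ℕ} (hS : S.natDegree < m) (h0 : S.coeff 0 ≠ 0) :
    ∃ y : K, y ≠ 0 ∧ Irreducible (S + C y⁻¹ * X ^ m) := by
  obtain ⟨y, hy, hirr⟩ :=
    hK _ (irreducible_map_ratFunc_C_X_mul_map_C_add_X_pow hS h0) X X_ne_zero
  rw [eval_X] at hy
  rw [map_evalRingHom_C_X_mul_map_C_add_X_pow] at hirr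
  refine ⟨y, hy, ?_⟩
  have : C y⁻¹ * (C y * S + X ^ m) = S + C y⁻¹ * X ^ m := by
    rw [mul_add, ← mul_assoc, ← C_mul, inv_mul_cancel₀ hy, C_1, one_mul]
  rw [← this, irreducible_isUnit_mul (isUnit_C.mpr (inv_ne_zero hy).isUnit)]
  exact hirr

theorem IsHilbertianField.infinite_setOf_irreducible_coeff_eq
    (hK : IsHilbertianField K) {S : K[X]} {n : ℕ} (hS : S.natDegree ≤ n)
    (h0 : S.coeff 0 ≠ 0) :
    {p : K[X] | Irreducible p ∧ ∀ i ≤ n, p.coeff i = S.coeff i}.Infinite := by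
  refine Set.Infinite.of_image natDegree ((Set.Ioi_infinite n).mono fun m (hm : n < m) => ?_)
  have hSm : S.natDegree < m := hS.trans_lt hm
  obtain ⟨y, hy, hirr⟩ := hK.exists_irreducible_add_C_inv_mul_X_pow hSm h0
  refine ⟨S + C y⁻¹ * X ^ m, ⟨hirr, fun i hi => ?_⟩, ?_⟩
  · simp [coeff_X_pow, (hi.trans_lt hm).ne]
  · have hdeg : (C y⁻¹ * X ^ m).natDegree = m := natDegree_C_mul_X_pow _ _ (inv_ne_zero hy)
    rw [natDegree_add_eq_right_of_natDegree_lt (hdeg.symm ▸ hSm), hdeg]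

end Hilbertian

/-- Let `K` be a Hilbertian field, `a_0, …, a_n ∈ K` with `a_0 ≠ 0`, and `m > n`.
Then there exists `y ∈ K \ {0}` such that `a_0 + a_1 X + ⋯ + a_n X^n + (1/y)·X^m`
is irreducible in `K[X]`. Consequently, there are infinitely many irreducible
polynomials in `K[X]` whose coefficient at `X^i` equals `a_i` for `i ∈ [0, n]`. -/
theorem stmt8 (K : Type*) [Field K] (hK : IsHilbertianField K) (n : ℕ) (a : ℕ → K)
    (h0 : a 0 ≠ 0) (m : ℕ) (hm : n < m) :
    (∃ y : K, y ≠ 0 ∧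
      Irreducible ((∑ i ∈ Finset.range (n + 1), Polynomial.C (a i) * Polynomial.X ^ i) +
        Polynomial.C y⁻¹ * Polynomial.X ^ m)) ∧
    {p : Polynomial K | Irreducible p ∧ ∀ i : ℕ, i ≤ n → p.coeff i = a i}.Infinite := by
  set S : K[X] := ∑ i ∈ Finset.range (n + 1), C (a i) * X ^ i
  have hS : S.natDegree ≤ n := natDegree_sum_le_of_forall_le _ _ fun i hi =>
    (natDegree_C_mul_X_pow_le _ _).trans (Nat.lt_succ_iff.mp (Finset.mem_range.mp hi))
  have hcoeff : ∀ i ≤ n, S.coeff i = a i := fun i hi => by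
    simp [S, Nat.lt_succ_iff.mpr hi]
  have hS0 : S.coeff 0 ≠ 0 := by rwa [hcoeff 0 n.zero_le]
  refine ⟨hK.exists_irreducible_add_C_inv_mul_X_pow (hS.trans_lt hm) hS0, ?_⟩
  refine (hK.infinite_setOf_irreducible_coeff_eq hS hS0).mono ?_
  rintro p ⟨hp, hpS⟩
  exact ⟨hp, fun i hi => (hpS i hi).trans (hcoeff i hi)⟩
end

section
/- Let S be an affine monoid (a finitely generated cancellative commutative monoid with torsion-free quotient group) whose complete integral closure Ŝ is factorial. Then Ŝ ≅ ℕ₀^s ⊕ ℤ^t for some non-negative integers s, t. -/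
variable {G : Type*} [AddCommGroup G]

/-- The complete integral closure `Ŝ = {x ∈ q(S) | ∃ c ∈ S, ∀ n, c + n·x ∈ S}` of a
submonoid `S` of an abelian group, computed inside the ambient group (any such `x`
automatically lies in the quotient group of `S`). -/
def addCompleteIntegralClosure (S : AddSubmonoid G) : AddSubmonoid G where
  carrier := {x | ∃ c ∈ S, ∀ n : ℕ, c + n • x ∈ S}
  zero_mem' := ⟨0, S.zero_mem, fun n => by simpa using S.zero_mem⟩
  add_mem' := by
    rintro x y ⟨c, hc, hcx⟩ ⟨d, hd, hdy⟩
    refine ⟨c + d, S.add_mem hc hd, fun n => ?_⟩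
    have h := S.add_mem (hcx n) (hdy n)
    have e : c + n • x + (d + n • y) = c + d + n • (x + y) := by rw [smul_add]; abel
    rwa [e] at h

/-- `p` divides `a` within the submonoid `S` (written additively). -/
def AddDvdIn (S : AddSubmonoid G) (p a : G) : Prop := ∃ c ∈ S, a = p + c

/-- `u` is a unit (invertible element) of the submonoid `S`. -/
def IsAddUnitIn (S : AddSubmonoid G) (u : G) : Prop := u ∈ S ∧ ∃ v ∈ S, u + v = 0

/-- `p` is a prime element of the submonoid `S`. -/
def IsAddPrimeIn (S : AddSubmonoid G) (p : G) : Prop :=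
  p ∈ S ∧ ¬ IsAddUnitIn S p ∧
    ∀ a ∈ S, ∀ b ∈ S, AddDvdIn S p (a + b) → AddDvdIn S p a ∨ AddDvdIn S p b

/-- A commutative cancellative monoid is factorial if every non-unit is a sum of
prime elements. -/
def IsFactorialAddMonoid (S : AddSubmonoid G) : Prop :=
  ∀ x ∈ S, ¬ IsAddUnitIn S x → ∃ l : Multiset G, (∀ p ∈ l, IsAddPrimeIn S p) ∧ l.sum = x


/-! Every prime `p` of `Ŝ` divides, inside `Ŝ`, one of the finitely many generators of `S`: some
`c ∈ S` has `c + p ∈ S`, a sum of generators. An element of a factorial monoid has only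
finitely many prime divisors up to units, so `Ŝ` has finitely many classes of primes. Choosing a
prime in each class, unique factorization makes `(m, u) ↦ ∑_{c ∈ m} p_c + u` an isomorphism from
`Multiset (classes) × Ŝˣ` onto `Ŝ`, and `Ŝˣ` is a subgroup of `ℤ^m`, hence free of finite rank. -/

def addUnitsIn (T : AddSubmonoid G) : AddSubgroup G where
  carrier := {u | u ∈ T ∧ -u ∈ T}
  zero_mem' := ⟨T.zero_mem, by simp⟩
  add_mem' ha hb := ⟨T.add_mem ha.1 hb.1, by rw [neg_add]; exact T.add_mem ha.2 hb.2⟩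
  neg_mem' h := ⟨h.2, by simpa using h.1⟩

def primeClasses (T : AddSubmonoid G) : Set (G ⧸ addUnitsIn T) :=
  QuotientAddGroup.mk '' {p | IsAddPrimeIn T p}

section Factorization

variable {T : AddSubmonoid G}

theorem isAddUnitIn_iff_mem_addUnitsIn {u : G} : IsAddUnitIn T u ↔ u ∈ addUnitsIn T := by
  refine ⟨fun ⟨hu, v, hv, huv⟩ => ⟨hu, ?_⟩, fun ⟨hu, hnu⟩ => ⟨hu, -u, hnu, add_neg_cancel u⟩⟩
  rwa [neg_eq_of_add_eq_zero_right huv]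

theorem addDvdIn_multiset_sum {l : Multiset G} (hl : ∀ x ∈ l, x ∈ T) {q : G} (hq : q ∈ l) :
    AddDvdIn T q l.sum := by
  classical
  exact ⟨(l.erase q).sum, multiset_sum_mem _ fun x hx => hl x (Multiset.mem_of_mem_erase hx),
    (Multiset.sum_erase hq).symm⟩

namespace IsAddPrimeIn

variable {p : G}

theorem not_addDvdIn_of_mem_addUnitsIn (hp : IsAddPrimeIn T p) {u : G} (hu : u ∈ addUnitsIn T) :
    ¬ AddDvdIn T p u := by
  rintro ⟨c, hc, rfl⟩
  refine hp.2.1 (isAddUnitIn_iff_mem_addUnitsIn.2 ⟨hp.1, ?_⟩)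
  simpa using T.add_mem hc hu.2

theorem exists_mem_addDvdIn_of_addDvdIn_sum (hp : IsAddPrimeIn T p) {l : Multiset G}
    (hl : ∀ x ∈ l, x ∈ T) (h : AddDvdIn T p l.sum) : ∃ x ∈ l, AddDvdIn T p x := by
  induction l using Multiset.induction with
  | empty => exact absurd h (hp.not_addDvdIn_of_mem_addUnitsIn (zero_mem _))
  | cons q l ih =>
    rw [Multiset.sum_cons] at h
    have hlT : ∀ x ∈ l, x ∈ T := fun x hx => hl x (Multiset.mem_cons_of_mem hx)
    rcases hp.2.2 q (hl q (Multiset.mem_cons_self q l)) l.sum (multiset_sum_mem l hlT) h with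
      hq | hsum
    · exact ⟨q, Multiset.mem_cons_self q l, hq⟩
    · obtain ⟨x, hx, hpx⟩ := ih hlT hsum
      exact ⟨x, Multiset.mem_cons_of_mem hx, hpx⟩

theorem sub_mem_addUnitsIn_of_addDvdIn (hp : IsAddPrimeIn T p) {q : G} (hq : IsAddPrimeIn T q)
    (h : AddDvdIn T p q) : q - p ∈ addUnitsIn T := by
  obtain ⟨c, hc, rfl⟩ := h
  rw [add_sub_cancel_left]
  rcases hq.2.2 p hp.1 c hc ⟨0, T.zero_mem, (add_zero _).symm⟩ with ⟨e, he, hpe⟩ | ⟨d, hd, hcd⟩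
  · have hce : c + e = 0 := add_left_cancel (a := p) (by rw [← add_assoc, ← hpe, add_zero])
    exact ⟨hc, neg_eq_of_add_eq_zero_right hce ▸ he⟩
  · have hpd : p + d = 0 :=
      add_left_cancel (a := c) (by rw [add_zero, ← add_assoc, add_comm c p, ← hcd])
    exact absurd ⟨hp.1, d, hd, hpd⟩ hp.2.1

theorem exists_mem_sub_mem_addUnitsIn (hp : IsAddPrimeIn T p) {l : Multiset G}
    (hl : ∀ q ∈ l, IsAddPrimeIn T q) (h : AddDvdIn T p l.sum) : ∃ q ∈ l, q - p ∈ addUnitsIn T := by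
  obtain ⟨q, hq, hpq⟩ := hp.exists_mem_addDvdIn_of_addDvdIn_sum (fun x hx => (hl x hx).1) h
  exact ⟨q, hq, hp.sub_mem_addUnitsIn_of_addDvdIn (hl q hq) hpq⟩

end IsAddPrimeIn

theorem eq_zero_of_sum_mem_addUnitsIn {l : Multiset G} (hl : ∀ q ∈ l, IsAddPrimeIn T q)
    (h : l.sum ∈ addUnitsIn T) : l = 0 := by
  by_contra hne
  obtain ⟨q, hq⟩ := Multiset.exists_mem_of_ne_zero hne
  exact (hl q hq).not_addDvdIn_of_mem_addUnitsIn h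
    (addDvdIn_multiset_sum (fun x hx => (hl x hx).1) hq)

theorem map_mk_eq_of_sum_sub_mem_addUnitsIn {l l' : Multiset G} (hl : ∀ p ∈ l, IsAddPrimeIn T p)
    (hl' : ∀ q ∈ l', IsAddPrimeIn T q) (h : l.sum - l'.sum ∈ addUnitsIn T) :
    l.map (QuotientAddGroup.mk (s := addUnitsIn T)) = l'.map QuotientAddGroup.mk := by
  classical
  induction l using Multiset.induction generalizing l' with
  | empty =>
    rw [eq_zero_of_sum_mem_addUnitsIn hl' (by simpa using neg_mem h)]
  | cons p l ih =>
    have hp := hl p (Multiset.mem_cons_self p l)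
    rw [Multiset.sum_cons] at h
    have hpl' : AddDvdIn T p l'.sum :=
      ⟨l.sum + (l'.sum - (p + l.sum)), T.add_mem (multiset_sum_mem _ fun x hx =>
        (hl x (Multiset.mem_cons_of_mem hx)).1) (by simpa using h.2), by abel⟩
    obtain ⟨q, hq, hpq⟩ := hp.exists_mem_sub_mem_addUnitsIn hl' hpl'
    have hrest : l.sum - (l'.erase q).sum ∈ addUnitsIn T := by
      convert add_mem h hpq using 1
      rw [← Multiset.sum_erase hq]; abel
    rw [Multiset.map_cons, ih (fun x hx => hl x (Multiset.mem_cons_of_mem hx))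
      (fun x hx => hl' x (Multiset.mem_of_mem_erase hx)) hrest,
      QuotientAddGroup.eq.2 (by rwa [neg_add_eq_sub]), ← Multiset.map_cons,
      Multiset.cons_erase hq]

theorem IsFactorialAddMonoid.exists_sum_add {x : G} (hT : IsFactorialAddMonoid T) (hx : x ∈ T) :
    ∃ l : Multiset G, (∀ p ∈ l, IsAddPrimeIn T p) ∧ ∃ u ∈ addUnitsIn T, x = l.sum + u := by
  by_cases hxu : IsAddUnitIn T x
  · exact ⟨0, by simp, x, isAddUnitIn_iff_mem_addUnitsIn.1 hxu, by simp⟩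
  · obtain ⟨l, hl, rfl⟩ := hT x hx hxu
    exact ⟨l, hl, 0, zero_mem _, (add_zero _).symm⟩

end Factorization

section Structure

variable {ι : Type*}

def repSumHom (T : AddSubmonoid G) (rep : ι → G) : Multiset ι × addUnitsIn T →+ G :=
  (Multiset.sumAddMonoidHom.comp (Multiset.mapAddMonoidHom rep)).coprod (addUnitsIn T).subtype

variable {T : AddSubmonoid G}

theorem repSumHom_apply (rep : ι → G) (m : Multiset ι) (u : addUnitsIn T) :
    repSumHom T rep (m, u) = (m.map rep).sum + u := rfl

theorem mrange_repSumHom (hT : IsFactorialAddMonoid T) {rep : ι → G}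
    (hrep : ∀ i, IsAddPrimeIn T (rep i))
    (hcover : ∀ q, IsAddPrimeIn T q → ∃ i, q - rep i ∈ addUnitsIn T) :
    AddMonoidHom.mrange (repSumHom T rep) = T := by
  apply le_antisymm
  · rintro _ ⟨⟨m, u⟩, rfl⟩
    refine T.add_mem (multiset_sum_mem _ ?_) u.2.1
    simpa using fun i _ => (hrep i).1
  · intro x hx
    obtain ⟨l, hl, u, hu, rfl⟩ := hT.exists_sum_add hx
    refine add_mem (multiset_sum_mem _ fun q hq => ?_) ⟨(0, ⟨u, hu⟩), by simp [repSumHom_apply]⟩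
    obtain ⟨i, hi⟩ := hcover q (hl q hq)
    exact ⟨({i}, ⟨q - rep i, hi⟩), by simp [repSumHom_apply]⟩

theorem injective_repSumHom {rep : ι → G} (hrep : ∀ i, IsAddPrimeIn T (rep i))
    (hinj : Function.Injective fun i => (rep i : G ⧸ addUnitsIn T)) :
    Function.Injective (repSumHom T rep) := by
  rintro ⟨m, u⟩ ⟨m', v⟩ h
  rw [repSumHom_apply, repSumHom_apply] at h
  have hm : m = m' := by
    have hsub : (m.map rep).sum - (m'.map rep).sum ∈ addUnitsIn T := by
      convert sub_mem v.2 u.2 using 1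
      rw [sub_eq_sub_iff_add_eq_add, h, add_comm]
    have hmap := map_mk_eq_of_sum_sub_mem_addUnitsIn (by simpa using fun i _ => hrep i)
      (by simpa using fun i _ => hrep i) hsub
    simp only [Multiset.map_map] at hmap
    exact Multiset.map_injective hinj hmap
  subst hm
  exact Prod.ext rfl (Subtype.ext (add_left_cancel h))

theorem IsFactorialAddMonoid.nonempty_addEquiv (hT : IsFactorialAddMonoid T) :
    Nonempty (T ≃+ Multiset (primeClasses T) × addUnitsIn T) := by
  choose rep hrep hmk using fun c : primeClasses T => c.2
  have hinj : Function.Injective fun c => (rep c : G ⧸ addUnitsIn T) := fun c d h =>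
    Subtype.ext ((hmk c).symm.trans (h.trans (hmk d)))
  have hcover : ∀ q, IsAddPrimeIn T q → ∃ c, q - rep c ∈ addUnitsIn T := fun q hq =>
    ⟨⟨_, q, hq, rfl⟩, by rw [← neg_add_eq_sub]; exact QuotientAddGroup.eq.1 (hmk _)⟩
  set φ := repSumHom T rep
  have hbij : Function.Bijective φ.mrangeRestrict :=
    ⟨fun a b h => injective_repSumHom hrep hinj (congrArg Subtype.val h),
      φ.mrangeRestrict_surjective⟩
  exact ⟨((AddEquiv.ofBijective _ hbij).trans
    (AddEquiv.addSubmonoidCongr (mrange_repSumHom hT hrep hcover))).symm⟩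

end Structure

section Finiteness

variable {T : AddSubmonoid G}

theorem IsFactorialAddMonoid.finite_mk_image_addDvdIn (hT : IsFactorialAddMonoid T) {x : G}
    (hx : x ∈ T) :
    (QuotientAddGroup.mk '' {q | IsAddPrimeIn T q ∧ AddDvdIn T q x} :
      Set (G ⧸ addUnitsIn T)).Finite := by
  classical
  obtain ⟨l, hl, u, hu, rfl⟩ := hT.exists_sum_add hx
  refine (l.map QuotientAddGroup.mk).toFinset.finite_toSet.subset ?_
  rintro _ ⟨q, ⟨hq, hqx⟩, rfl⟩
  rcases hq.2.2 _ (multiset_sum_mem _ fun r hr => (hl r hr).1) u hu.1 hqx with hql | hqu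
  · obtain ⟨r, hr, hrq⟩ := hq.exists_mem_sub_mem_addUnitsIn hl hql
    simpa using ⟨r, hr, (QuotientAddGroup.eq.2 (by rwa [neg_add_eq_sub])).symm⟩
  · exact absurd hqu (hq.not_addDvdIn_of_mem_addUnitsIn hu)

theorem IsFactorialAddMonoid.finite_primeClasses (hT : IsFactorialAddMonoid T) {X : Set G}
    (hX : X.Finite) (hXT : X ⊆ T) (hdvd : ∀ p, IsAddPrimeIn T p → ∃ x ∈ X, AddDvdIn T p x) :
    (primeClasses T).Finite := by
  refine (hX.biUnion fun x hx => hT.finite_mk_image_addDvdIn (hXT hx)).subset ?_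
  rintro _ ⟨p, hp, rfl⟩
  obtain ⟨x, hx, hpx⟩ := hdvd p hp
  exact Set.mem_biUnion hx ⟨p, ⟨hp, hpx⟩, rfl⟩

end Finiteness

theorem le_addCompleteIntegralClosure (S : AddSubmonoid G) : S ≤ addCompleteIntegralClosure S :=
  fun x hx => ⟨x, hx, fun n => S.add_mem hx (nsmul_mem hx n)⟩

theorem exists_mem_addDvdIn_of_isAddPrimeIn_addCompleteIntegralClosure {X : Set G} {p : G}
    (hp : IsAddPrimeIn (addCompleteIntegralClosure (AddSubmonoid.closure X)) p) :
    ∃ x ∈ X, AddDvdIn (addCompleteIntegralClosure (AddSubmonoid.closure X)) p x := by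
  have hle := le_addCompleteIntegralClosure (AddSubmonoid.closure X)
  obtain ⟨c, hc, hcp⟩ := hp.1
  obtain ⟨l, hlX, hl⟩ := AddSubmonoid.exists_multiset_of_mem_closure (by simpa using hcp 1)
  obtain ⟨x, hx, hpx⟩ := hp.exists_mem_addDvdIn_of_addDvdIn_sum
    (fun y hy => hle (AddSubmonoid.subset_closure (hlX y hy))) ⟨c, hle hc, by rw [hl, add_comm]⟩
  exact ⟨x, hlX x hx, hpx⟩

theorem AddSubgroup.exists_addEquiv_fin_arrow_int {ι : Type*} [Finite ι]
    (H : AddSubgroup (ι → ℤ)) :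
    ∃ t : ℕ, Nonempty (H ≃+ (Fin t → ℤ)) := by
  obtain ⟨t, b⟩ := Submodule.basisOfPid (Pi.basisFun ℤ ι) (AddSubgroup.toIntSubmodule H)
  exact ⟨t, ⟨(b.repr ≪≫ₗ Finsupp.linearEquivFunOnFinite ℤ ℤ (Fin t)).toAddEquiv⟩⟩

theorem Multiset.nonempty_addEquiv_fin_arrow_nat (α : Type*) [Finite α] :
    Nonempty (Multiset α ≃+ (Fin (Nat.card α) → ℕ)) := by
  classical
  exact ⟨Multiset.toFinsupp.trans ((Finsupp.domCongr (Finite.equivFin α)).trans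
    (Finsupp.linearEquivFunOnFinite ℕ ℕ _).toAddEquiv)⟩

/-- Let `S` be an affine monoid (a finitely generated submonoid of some `ℤ^m`) whose
complete integral closure `Ŝ` is factorial. Then `Ŝ ≅ ℕ₀^s ⊕ ℤ^t` for some
non-negative integers `s`, `t`. -/
theorem stmt10 (m : ℕ) (S : AddSubmonoid (Fin m → ℤ)) (hfg : S.FG)
    (hfact : IsFactorialAddMonoid (addCompleteIntegralClosure S)) :
    ∃ s t : ℕ, Nonempty (↥(addCompleteIntegralClosure S) ≃+ ((Fin s → ℕ) × (Fin t → ℤ))) := by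
  obtain ⟨X, rfl⟩ := hfg
  set T := addCompleteIntegralClosure (AddSubmonoid.closure (X : Set (Fin m → ℤ)))
  have : Finite (primeClasses T) := Set.Finite.to_subtype <|
    hfact.finite_primeClasses X.finite_toSet
      (fun x hx => le_addCompleteIntegralClosure _ (AddSubmonoid.subset_closure hx))
      fun _ hp => exists_mem_addDvdIn_of_isAddPrimeIn_addCompleteIntegralClosure hp
  obtain ⟨eT⟩ := hfact.nonempty_addEquiv
  obtain ⟨eP⟩ := Multiset.nonempty_addEquiv_fin_arrow_nat (primeClasses T)
  obtain ⟨t, ⟨eU⟩⟩ := (addUnitsIn T).exists_addEquiv_fin_arrow_int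
  exact ⟨_, t, ⟨eT.trans (eP.prodCongr eU)⟩⟩
end

section
/- Let S ⊆ T be a root extension of commutative cancellative monoids (for every t ∈ T there is n ∈ ℕ with n·t ∈ S). Then the map q ↦ q ∩ S is an inclusion-preserving bijection from the prime ideals of T onto the prime ideals of S. -/
/-!
A prime `q` of `T` is determined by `q ∩ S`: since `q` is prime, `t ∈ q` iff `n • t ∈ q` for any
`n > 0`, and some such `n • t` lies in `S`. Conversely a prime `p` of `S` is the trace of its
radical `{t | ∃ n > 0, n • t ∈ p}`, which is a prime of `T` because any two elements of `T`
have a common positive multiple in `S`.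
-/

variable {T : Type*} [AddCancelCommMonoid T]

/-- A prime ideal of a commutative cancellative monoid `T`: an ideal (`I + T ⊆ I`)
whose complement is a submonoid. -/
def IsMonoidPrimeIdeal (I : Set T) : Prop :=
  (∀ a ∈ I, ∀ b : T, a + b ∈ I) ∧ (0 : T) ∉ I ∧ ∀ a b : T, a + b ∈ I → a ∈ I ∨ b ∈ I

/-- A prime ideal of a submonoid `S ⊆ T` (realized as a subset of `T` contained
in `S`). -/
def IsMonoidPrimeIdealOn (S : AddSubmonoid T) (I : Set T) : Prop :=
  I ⊆ (S : Set T) ∧ (∀ a ∈ I, ∀ b ∈ S, a + b ∈ I) ∧ (0 : T) ∉ I ∧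
    ∀ a ∈ S, ∀ b ∈ S, a + b ∈ I → a ∈ I ∨ b ∈ I

def addRadical (p : Set T) : Set T :=
  {t | ∃ n : ℕ, 0 < n ∧ n • t ∈ p}

namespace IsMonoidPrimeIdealOn

variable {S : AddSubmonoid T} {p : Set T}

theorem nsmul_mem_iff (hp : IsMonoidPrimeIdealOn S p) {t : T} (ht : t ∈ S) {n : ℕ}
    (hn : 0 < n) : n • t ∈ p ↔ t ∈ p := by
  obtain ⟨n, rfl⟩ := Nat.exists_eq_add_one_of_ne_zero hn.ne'
  induction n with
  | zero => rw [zero_add, one_nsmul]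
  | succ n ih =>
    rw [succ_nsmul]
    constructor
    · intro h
      exact (hp.2.2.2 _ (S.nsmul_mem ht _) t ht h).elim (ih n.succ_pos).1 id
    · intro h
      rw [add_comm]
      exact hp.2.1 t h _ (S.nsmul_mem ht _)

theorem addRadical_inter (hp : IsMonoidPrimeIdealOn S p) : addRadical p ∩ S = p := by
  ext t
  constructor
  · rintro ⟨⟨n, hn, hnt⟩, htS⟩
    exact (hp.nsmul_mem_iff htS hn).1 hnt
  · intro ht
    exact ⟨⟨1, one_pos, by rwa [one_nsmul]⟩, hp.1 ht⟩

theorem isMonoidPrimeIdeal_addRadical (hroot : ∀ t : T, ∃ n : ℕ, 0 < n ∧ n • t ∈ S)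
    (hp : IsMonoidPrimeIdealOn S p) : IsMonoidPrimeIdeal (addRadical p) := by
  refine ⟨?_, ?_, ?_⟩
  · rintro a ⟨n, hn, hna⟩ b
    obtain ⟨m, hm, hmb⟩ := hroot b
    refine ⟨m * n, Nat.mul_pos hm hn, ?_⟩
    rw [smul_add, mul_nsmul', mul_nsmul]
    exact hp.2.1 _ ((hp.nsmul_mem_iff (hp.1 hna) hm).2 hna) _ (S.nsmul_mem hmb n)
  · rintro ⟨n, -, hn0⟩
    exact hp.2.2.1 (by rwa [nsmul_zero] at hn0)
  · rintro a b ⟨n, hn, hnab⟩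
    obtain ⟨k, hk, hka⟩ := hroot a
    obtain ⟨l, hl, hlb⟩ := hroot b
    have hN : 0 < k * l * n := by positivity
    have haS : (k * l * n) • a ∈ S := by
      rw [mul_assoc, mul_nsmul]
      exact S.nsmul_mem hka _
    have hbS : (k * l * n) • b ∈ S := by
      rw [mul_comm k, mul_assoc, mul_nsmul]
      exact S.nsmul_mem hlb _
    have habp : (k * l * n) • a + (k * l * n) • b ∈ p := by
      rw [← smul_add, mul_nsmul']
      exact (hp.nsmul_mem_iff (hp.1 hnab) (Nat.mul_pos hk hl)).2 hnab
    exact (hp.2.2.2 _ haS _ hbS habp).imp (⟨_, hN, ·⟩) (⟨_, hN, ·⟩)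

end IsMonoidPrimeIdealOn

theorem isMonoidPrimeIdealOn_top_iff {q : Set T} :
    IsMonoidPrimeIdealOn ⊤ q ↔ IsMonoidPrimeIdeal q := by
  simp [IsMonoidPrimeIdealOn, IsMonoidPrimeIdeal]

namespace IsMonoidPrimeIdeal

variable {q q' : Set T}

theorem nsmul_mem_iff (hq : IsMonoidPrimeIdeal q) {t : T} {n : ℕ} (hn : 0 < n) :
    n • t ∈ q ↔ t ∈ q :=
  (isMonoidPrimeIdealOn_top_iff.2 hq).nsmul_mem_iff (AddSubmonoid.mem_top t) hn

theorem inter (hq : IsMonoidPrimeIdeal q) (S : AddSubmonoid T) :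
    IsMonoidPrimeIdealOn S (q ∩ S) := by
  refine ⟨Set.inter_subset_right, fun a ha b hb => ⟨hq.1 a ha.1 b, S.add_mem ha.2 hb⟩,
    fun h => hq.2.1 h.1, fun a ha b hb hab => ?_⟩
  exact (hq.2.2 a b hab.1).imp (⟨·, ha⟩) (⟨·, hb⟩)

theorem subset_of_inter_subset {S : AddSubmonoid T}
    (hroot : ∀ t : T, ∃ n : ℕ, 0 < n ∧ n • t ∈ S) (hq : IsMonoidPrimeIdeal q)
    (hq' : IsMonoidPrimeIdeal q') (h : q ∩ S ⊆ q' ∩ S) : q ⊆ q' := by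
  intro t ht
  obtain ⟨n, hn, hnS⟩ := hroot t
  exact (hq'.nsmul_mem_iff hn).1 (h ⟨(hq.nsmul_mem_iff hn).2 ht, hnS⟩).1

end IsMonoidPrimeIdeal

/-- Let `S ⊆ T` be a root extension of commutative cancellative monoids (every
`t ∈ T` has a positive multiple in `S`). Then `q ↦ q ∩ S` is an inclusion-preserving
bijection from the prime ideals of `T` onto the prime ideals of `S`. -/
theorem stmt12 (S : AddSubmonoid T) (hroot : ∀ t : T, ∃ n : ℕ, 0 < n ∧ n • t ∈ S) :
    Set.BijOn (fun q : Set T => q ∩ (S : Set T))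
        {q : Set T | IsMonoidPrimeIdeal q} {p : Set T | IsMonoidPrimeIdealOn S p} ∧
      ∀ q q' : Set T, IsMonoidPrimeIdeal q → IsMonoidPrimeIdeal q' →
        (q ⊆ q' ↔ q ∩ (S : Set T) ⊆ q' ∩ (S : Set T)) := by
  have inter_subset_iff : ∀ q q' : Set T, IsMonoidPrimeIdeal q → IsMonoidPrimeIdeal q' →
      (q ⊆ q' ↔ q ∩ (S : Set T) ⊆ q' ∩ (S : Set T)) := fun q q' hq hq' =>
    ⟨(Set.inter_subset_inter_left _ ·), hq.subset_of_inter_subset hroot hq'⟩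
  refine ⟨⟨fun q hq => hq.inter S, ?_, ?_⟩, inter_subset_iff⟩
  · intro q hq q' hq' h
    exact ((inter_subset_iff q q' hq hq').2 h.le).antisymm ((inter_subset_iff q' q hq' hq).2 h.ge)
  · intro p hp
    exact ⟨addRadical p, hp.isMonoidPrimeIdeal_addRadical hroot, hp.addRadical_inter⟩
end

section
/- Let D be a Mori domain with complete integral closure D̂. Then Reg(D) = {a ∈ D | ∀ z ∈ D̂, z·a ∈ D ⟹ z ∈ D} is a saturated submonoid of the multiplicative monoid (D̂ \ {0}, ·): if a, b ∈ Reg(D), z ∈ D̂ \ {0}, and a·z = b, then z ∈ Reg(D). -/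
open FractionalIdeal
open scoped nonZeroDivisors

section Regular

variable {M : Type*} [CommSemigroup M]

/-- `Reg(D)` is `regularElements D D̂`, with `D` viewed inside its quotient field. -/
def regularElements (S : Subsemigroup M) (H : Set M) : Set M :=
  {a | a ∈ S ∧ ∀ z ∈ H, z * a ∈ S → z ∈ S}

theorem mem_regularElements_of_mul_eq {S : Subsemigroup M} {H : Set M} {a b z : M}
    (ha : a ∈ regularElements S H) (hb : b ∈ regularElements S H) (hz : z ∈ H)
    (habz : a * z = b) : z ∈ regularElements S H := by
  obtain ⟨haS, ha_cancel⟩ := ha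
  obtain ⟨hbS, hb_cancel⟩ := hb
  refine ⟨ha_cancel z hz (by rwa [mul_comm, habz]), fun w hw hwz => hb_cancel w hw ?_⟩
  have hwb : w * b = w * z * a := by rw [← habz, mul_comm a, mul_assoc]
  exact hwb ▸ S.mul_mem hwz haS

end Regular

theorem stmt14_general (D : Type*) [CommRing D] [IsDomain D]
    -- the image of `D` in its quotient field
    (D' : Set (FractionRing D)) (hD' : D' = Set.range (algebraMap D (FractionRing D)))
    -- the complete integral closure of `D`
    (hatD : Set (FractionRing D))
    -- the monoid of regular elements of `D`
    (Reg : Set (FractionRing D)) (hReg : Reg = {a | a ∈ D' ∧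
      ∀ z ∈ hatD, z * a ∈ D' → z ∈ D'}) :
    ∀ a b z : FractionRing D, a ∈ Reg → b ∈ Reg → z ∈ hatD → z ≠ 0 → a * z = b →
      z ∈ Reg := by
  intro a b z ha hb hz _ habz
  subst hReg hD'
  exact mem_regularElements_of_mul_eq
    (S := MulHom.srange (algebraMap D (FractionRing D) : D →ₙ* _)) ha hb hz habz

/-- Let `D` be a Mori domain (ACC on divisorial ideals) with complete integral
closure `D̂` inside its quotient field. Then the monoid of regular elements
`Reg(D) = {a ∈ D | ∀ z ∈ D̂, z·a ∈ D → z ∈ D}` is a saturated submonoid of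
`(D̂ \ {0}, ·)`: if `a, b ∈ Reg(D)`, `z ∈ D̂ \ {0}` and `a·z = b`, then `z ∈ Reg(D)`. -/
theorem stmt14 (D : Type*) [CommRing D] [IsDomain D]
    -- the Mori hypothesis: the ascending chain condition on divisorial ideals
    (hMori : ∀ f : ℕ →o FractionalIdeal D⁰ (FractionRing D),
      (∀ n, f n ≤ 1 ∧ ((f n)⁻¹)⁻¹ = f n) → ∃ N, ∀ n, N ≤ n → f n = f N)
    -- the image of `D` in its quotient field
    (D' : Set (FractionRing D)) (hD' : D' = Set.range (algebraMap D (FractionRing D)))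
    -- the complete integral closure of `D`
    (hatD : Set (FractionRing D)) (hhatD : hatD = {x | ∃ c : D, c ≠ 0 ∧
      ∀ n : ℕ, algebraMap D (FractionRing D) c * x ^ n ∈ D'})
    -- the monoid of regular elements of `D`
    (Reg : Set (FractionRing D)) (hReg : Reg = {a | a ∈ D' ∧
      ∀ z ∈ hatD, z * a ∈ D' → z ∈ D'}) :
    ∀ a b z : FractionRing D, a ∈ Reg → b ∈ Reg → z ∈ hatD → z ≠ 0 → a * z = b →
      z ∈ Reg :=
  stmt14_general D D' hD' hatD Reg hReg
end

section
/- Let K be a field, S an affine monoid with factorial complete integral closure Ŝ = ℕ₀^s ⊕ ℤ^t, conductor f_S = (S : Ŝ), and Reg = Reg(K[S]). Let f ∈ K[Ŝ] be such that f·h ∈ Reg for some h ∈ K[Ŝ], and let i ∈ [1, s] be such that the height-one prime p_i = {α ∈ S | π_i(α) ≠ 0} contains f_S. Then the variable X_i does not divide f in K[Ŝ] = K[X_1,…,X_s, Y_1^{±1},…,Y_t^{±1}]. -/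
/-!
Write `e` for the exponent of `X_i` and suppose `f = X^e q` with `q ∈ K[Ŝ]`. For `c` in the
conductor, `X^(c - e) · f h = X^c · q h` lies in `K[S]` because `X^c K[Ŝ] ⊆ K[S]`; if moreover
`c - e ∈ Ŝ`, regularity of `f h` forces `c - e ∈ S`. Since `f_S + Ŝ ⊆ f_S` and `π_i > 0` on `f_S`,
this shows `f_S - e ⊆ f_S`. The conductor is nonempty (complete integral closure applied to the
finitely many generators of `Ŝ`), so subtracting `e` repeatedly produces an element of `f_S` with
`π_i = 0`, contradicting `f_S ⊆ p_i`.
-/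

open AddMonoidAlgebra

section Supported

variable {K G : Type*} [Semiring K]

theorem single_mem_supported_iff {s : Set G} {g : G} {r : K} (hr : r ≠ 0) :
    single g r ∈ supported K K s ↔ g ∈ s := by
  simp [mem_supported, coeff_single, Finsupp.support_single _ hr]

variable [AddMonoid G]

theorem setOf_coeff_ne_zero_mem_eq_supported (M : AddSubmonoid G) :
    {p : AddMonoidAlgebra K G | ∀ g, p.coeff g ≠ 0 → g ∈ M} =
      (supported K K (M : Set G) : Set _) := by
  ext p
  simp only [Set.mem_ofPred_eq, SetLike.mem_coe, mem_supported', not_imp_comm, ne_eq]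

theorem mul_mem_supported {M : AddSubmonoid G} {p q : AddMonoidAlgebra K G}
    (hp : p ∈ supported K K M) (hq : q ∈ supported K K M) : p * q ∈ supported K K M := by
  classical
  intro g hg
  obtain ⟨a, ha, b, hb, rfl⟩ := Finset.mem_add.mp (support_coeff_mul_subset p q hg)
  exact M.add_mem (hp ha) (hq hb)

end Supported

namespace AddSubmonoid

def conductor {G : Type*} [AddZeroClass G] (S N : AddSubmonoid G) : Set G :=
  {c | ∀ y ∈ N, c + y ∈ S}

variable {G : Type*}

section AddCommMonoid

variable [AddCommMonoid G] {S N : AddSubmonoid G} {c : G}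

theorem mem_of_mem_conductor (hc : c ∈ S.conductor N) : c ∈ S := by
  simpa using hc 0 N.zero_mem

theorem add_mem_conductor (hc : c ∈ S.conductor N) {y : G} (hy : y ∈ N) :
    c + y ∈ S.conductor N := fun y' hy' => add_assoc c y y' ▸ hc _ (N.add_mem hy hy')

theorem conductor_nonempty {ι : Type*} [Fintype ι] (g : ι → G)
    (hg : ∀ k, ∃ c ∈ S, ∀ n : ℕ, c + n • g k ∈ S)
    (hN : ∀ y ∈ N, ∃ n : ι → ℕ, ∑ k, n k • g k = y) : (S.conductor N).Nonempty := by
  choose c _ hc using hg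
  refine ⟨∑ k, c k, fun y hy => ?_⟩
  obtain ⟨n, rfl⟩ := hN y hy
  rw [← Finset.sum_add_distrib]
  exact S.sum_mem fun k _ => hc k (n k)

theorem single_mul_mem_supported_of_mem_conductor {K : Type*} [Semiring K]
    (hc : c ∈ S.conductor N) (r : K) {p : AddMonoidAlgebra K G} (hp : p ∈ supported K K N) :
    single c r * p ∈ supported K K S := by
  classical
  intro g hg
  obtain ⟨y, hy, rfl⟩ := Finset.mem_image.mp (support_coeff_single_mul_subset p r c hg)
  exact hc y (hp hy)

end AddCommMonoid

section AddCommGroup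

variable [AddCommGroup G] {S N : AddSubmonoid G} {K : Type*} [Semiring K] [Nontrivial K]
  {a b : AddMonoidAlgebra K G} {e : G}

theorem sub_mem_of_mem_conductor
    (ha : ∀ z ∈ supported K K N, z * a ∈ supported K K S → z ∈ supported K K S)
    (hb : b ∈ supported K K N) (hab : a = single e 1 * b) {c : G}
    (hc : c ∈ S.conductor N) (hce : c - e ∈ N) : c - e ∈ S := by
  have hz := (single_mem_supported_iff (K := K) one_ne_zero).mpr hce
  have hza : single (c - e) (1 : K) * a = single c 1 * b := by
    rw [hab, ← mul_assoc, single_mul_single, sub_add_cancel, one_mul]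
  exact (single_mem_supported_iff one_ne_zero).mp
    (ha _ hz (hza ▸ single_mul_mem_supported_of_mem_conductor hc 1 hb))

theorem sub_mem_conductor
    (ha : ∀ z ∈ supported K K N, z * a ∈ supported K K S → z ∈ supported K K S)
    (hb : b ∈ supported K K N) (hab : a = single e 1 * b)
    (hN : ∀ c ∈ S.conductor N, c - e ∈ N) {c : G} (hc : c ∈ S.conductor N) :
    c - e ∈ S.conductor N := by
  intro y hy
  have hcy := add_mem_conductor hc hy
  rw [sub_add_eq_add_sub]
  exact sub_mem_of_mem_conductor ha hb hab hcy (hN _ hcy)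

end AddCommGroup

end AddSubmonoid

theorem eq_empty_of_forall_sub_mem {G : Type*} [Sub G] {A : Set G} {e : G} (φ : G → ℤ)
    (hφ : ∀ c, φ (c - e) = φ c - 1) (hpos : ∀ c ∈ A, 0 < φ c) (hsub : ∀ c ∈ A, c - e ∈ A) :
    A = ∅ := by
  have key : ∀ n : ℕ, ∀ c ∈ A, φ c ≠ n := by
    intro n
    induction n with
    | zero => exact fun c hc h => (hpos c hc).ne' (by simpa using h)
    | succ n ih => exact fun c hc h => ih _ (hsub c hc) (by rw [hφ, h]; push_cast; ring)
  exact Set.eq_empty_of_forall_notMem fun c hc =>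
    key (φ c).toNat c hc (Int.toNat_of_nonneg (hpos c hc).le).symm

def orthantGen (s t : ℕ) : Fin s ⊕ Fin t ⊕ Fin t → (Fin s → ℤ) × (Fin t → ℤ)
  | .inl j => (Pi.single j 1, 0)
  | .inr (.inl j) => (0, Pi.single j 1)
  | .inr (.inr j) => (0, -Pi.single j 1)

theorem orthantGen_fst_nonneg {s t : ℕ} (k : Fin s ⊕ Fin t ⊕ Fin t) (j : Fin s) :
    0 ≤ (orthantGen s t k).1 j := by
  rcases k with k | k | k <;> simp [orthantGen, Pi.single_apply]
  split_ifs <;> norm_num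

theorem exists_sum_nsmul_orthantGen_eq {s t : ℕ} (y : (Fin s → ℤ) × (Fin t → ℤ))
    (hy : ∀ j, 0 ≤ y.1 j) : ∃ n : Fin s ⊕ Fin t ⊕ Fin t → ℕ, ∑ k, n k • orthantGen s t k = y := by
  refine ⟨Sum.elim (fun j => (y.1 j).toNat) (Sum.elim (fun j => (y.2 j).toNat)
    (fun j => (-y.2 j).toNat)), ?_⟩
  ext j
  · simp only [Prod.fst_sum, Prod.smul_fst, Finset.sum_apply, Pi.smul_apply]
    simp [orthantGen, Fintype.sum_sum_type, Pi.single_apply, hy j]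
  · simp only [Prod.snd_sum, Prod.smul_snd, Finset.sum_apply, Pi.smul_apply]
    simp [orthantGen, Fintype.sum_sum_type, Pi.single_apply]
    omega

theorem stmt18_general (K : Type*) [Field K] (s t : ℕ)
    (S : AddSubmonoid ((Fin s → ℤ) × (Fin t → ℤ)))
    -- … whose complete integral closure is `Ŝ = N ≅ ℕ₀^s ⊕ ℤ^t`
    (N : AddSubmonoid ((Fin s → ℤ) × (Fin t → ℤ)))
    (hN : (N : Set ((Fin s → ℤ) × (Fin t → ℤ))) = {x | ∀ i : Fin s, 0 ≤ x.1 i})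
    (hSN : (S : Set ((Fin s → ℤ) × (Fin t → ℤ))) ⊆ N)
    (hcic : {x : (Fin s → ℤ) × (Fin t → ℤ) | ∃ c ∈ S, ∀ n : ℕ, c + n • x ∈ S}
      = (N : Set ((Fin s → ℤ) × (Fin t → ℤ))))
    -- the monoid algebras `K[S] ⊆ K[Ŝ]` inside `K[G]`
    (KS KN : Set (AddMonoidAlgebra K ((Fin s → ℤ) × (Fin t → ℤ))))
    (hKS : KS = {p | ∀ g, p.coeff g ≠ 0 → g ∈ S})
    (hKN : KN = {p | ∀ g, p.coeff g ≠ 0 → g ∈ N})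
    -- the monoid of regular elements of `K[S]`
    (Reg : Set (AddMonoidAlgebra K ((Fin s → ℤ) × (Fin t → ℤ))))
    (hReg : Reg = {a | a ∈ KS ∧ ∀ z ∈ KN, z * a ∈ KS → z ∈ KS})
    -- the conductor `f_S = (S : Ŝ)`
    (fS : Set ((Fin s → ℤ) × (Fin t → ℤ)))
    (hfS : fS = {g | ∀ y ∈ N, g + y ∈ S})
    -- an index `i` such that `p_i = {α ∈ S | π_i(α) ≠ 0} ⊇ f_S`
    (i : Fin s) (hpi : ∀ g ∈ fS, g.1 i ≠ 0)
    -- `f ∈ K[Ŝ]` with `f·h ∈ Reg(K[S])` for some `h ∈ K[Ŝ]`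
    (f h : AddMonoidAlgebra K ((Fin s → ℤ) × (Fin t → ℤ)))
    (hh : h ∈ KN) (hfh : f * h ∈ Reg) :
    -- then `X_i` does not divide `f` in `K[Ŝ]`
    ¬ ∃ q ∈ KN, f = AddMonoidAlgebra.single ((Pi.single i 1 : Fin s → ℤ), (0 : Fin t → ℤ)) (1 : K) * q := by
  rintro ⟨q, hq, rfl⟩
  rw [setOf_coeff_ne_zero_mem_eq_supported] at hKS hKN
  subst hKS hKN hReg hfS
  have memN (x : (Fin s → ℤ) × (Fin t → ℤ)) : x ∈ N ↔ ∀ j, 0 ≤ x.1 j := Set.ext_iff.mp hN x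
  have hnonneg (c) (hc : c ∈ S.conductor N) : ∀ j, 0 ≤ c.1 j :=
    (memN c).mp (hSN (S.mem_of_mem_conductor hc))
  have hpos (c) (hc : c ∈ S.conductor N) : 0 < c.1 i := (hnonneg c hc i).lt_of_ne (hpi c hc).symm
  have hsub_memN (c) (hc : c ∈ S.conductor N) : c - (Pi.single i 1, 0) ∈ N := by
    refine (memN _).mpr fun j => ?_
    rcases eq_or_ne j i with rfl | hj
    · simpa using Int.add_one_le_of_lt (hpos c hc)
    · simpa [hj] using hnonneg c hc j
  have hstable (c) (hc : c ∈ S.conductor N) : c - (Pi.single i 1, 0) ∈ S.conductor N :=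
    S.sub_mem_conductor hfh.2 (mul_mem_supported hq hh) (mul_assoc ..) hsub_memN hc
  obtain ⟨c, hc⟩ := S.conductor_nonempty (orthantGen s t)
    (fun k => (Set.ext_iff.mp hcic _).mpr ((memN _).mpr (orthantGen_fst_nonneg k)))
    (fun y hy => exists_sum_nsmul_orthantGen_eq y ((memN y).mp hy))
  exact (eq_empty_of_forall_sub_mem (fun c => c.1 i) (fun c => by simp) hpos hstable).subset hc

/-- Let `K` be a field and `S` an affine monoid with factorial complete integral
closure `Ŝ = ℕ₀^s ⊕ ℤ^t`, realized as a submonoid of the group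
`G = ℤ^s ⊕ ℤ^t` with `Ŝ = N = {x | x.1 i ≥ 0 for all i}`.  Work inside
`K[Ŝ] = K[X_1,…,X_s,Y_1^{±1},…,Y_t^{±1}] ⊆ K[G]`, i.e. the set `KN` of elements of
the monoid algebra `K[G]` supported on `N`, and let `KS ⊆ K[G]` be the monoid
algebra `K[S]`, `Reg` its monoid of regular elements, and `f_S = (S : Ŝ)` the
conductor.  If `f ∈ K[Ŝ]` satisfies `f·h ∈ Reg` for some `h ∈ K[Ŝ]`, and
`i ∈ [1,s]` is such that the height-one prime `p_i = {α ∈ S | π_i(α) ≠ 0}` contains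
`f_S` (equivalently, `π_i` is nonzero on `f_S`), then the variable `X_i` does not
divide `f` in `K[Ŝ]`. -/
theorem stmt18 (K : Type*) [Field K] (s t : ℕ)
    (S : AddSubmonoid ((Fin s → ℤ) × (Fin t → ℤ)))
    -- `S` is an affine monoid …
    (hfg : S.FG)
    -- … with quotient group all of `G = ℤ^s ⊕ ℤ^t` …
    (hq : AddSubgroup.closure (S : Set ((Fin s → ℤ) × (Fin t → ℤ))) = ⊤)
    -- … whose complete integral closure is `Ŝ = N ≅ ℕ₀^s ⊕ ℤ^t`
    (N : AddSubmonoid ((Fin s → ℤ) × (Fin t → ℤ)))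
    (hN : (N : Set ((Fin s → ℤ) × (Fin t → ℤ))) = {x | ∀ i : Fin s, 0 ≤ x.1 i})
    (hSN : (S : Set ((Fin s → ℤ) × (Fin t → ℤ))) ⊆ N)
    (hcic : {x : (Fin s → ℤ) × (Fin t → ℤ) | ∃ c ∈ S, ∀ n : ℕ, c + n • x ∈ S}
      = (N : Set ((Fin s → ℤ) × (Fin t → ℤ))))
    -- the monoid algebras `K[S] ⊆ K[Ŝ]` inside `K[G]`
    (KS KN : Set (AddMonoidAlgebra K ((Fin s → ℤ) × (Fin t → ℤ))))
    (hKS : KS = {p | ∀ g, p.coeff g ≠ 0 → g ∈ S})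
    (hKN : KN = {p | ∀ g, p.coeff g ≠ 0 → g ∈ N})
    -- the monoid of regular elements of `K[S]`
    (Reg : Set (AddMonoidAlgebra K ((Fin s → ℤ) × (Fin t → ℤ))))
    (hReg : Reg = {a | a ∈ KS ∧ ∀ z ∈ KN, z * a ∈ KS → z ∈ KS})
    -- the conductor `f_S = (S : Ŝ)`
    (fS : Set ((Fin s → ℤ) × (Fin t → ℤ)))
    (hfS : fS = {g | ∀ y ∈ N, g + y ∈ S})
    -- an index `i` such that `p_i = {α ∈ S | π_i(α) ≠ 0} ⊇ f_S`
    (i : Fin s) (hpi : ∀ g ∈ fS, g.1 i ≠ 0)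
    -- `f ∈ K[Ŝ]` with `f·h ∈ Reg(K[S])` for some `h ∈ K[Ŝ]`
    (f h : AddMonoidAlgebra K ((Fin s → ℤ) × (Fin t → ℤ)))
    (hf : f ∈ KN) (hh : h ∈ KN) (hfh : f * h ∈ Reg) :
    -- then `X_i` does not divide `f` in `K[Ŝ]`
    ¬ ∃ q ∈ KN, f = AddMonoidAlgebra.single ((Pi.single i 1 : Fin s → ℤ), (0 : Fin t → ℤ)) (1 : K) * q :=
  stmt18_general K s t S N hN hSN hcic KS KN hKS hKN Reg hReg fS hfS i hpi f h hh hfh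
end
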